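/- arXiv:2109.12618 — 2 statements merged into one kernel-verified Lean document; each statement's English description precedes it below -/
import Mathlib

section
/- For a signed bipartite graph (G, σ): χ_c(G, σ) ≤ 3 if and only if (G, σ) admits a switching homomorphism to (K_{3,3}, M), the signed K_{3,3} whose negative edges form a perfect matching. -/
/-- A signed graph: two symmetric edge relations (positive and negative edges).
Parallel edges of different signs (digons) and negative loops are representable;
positive loops are disallowed (graphs in the paper have no loops unless specified,
loops occurring in circular cliques are always negative). -/
structure SGraph (V : Type) where
  pos : V → V → Prop
  neg : V → V → Prop
  pos_symm : ∀ u v, pos u v → pos v u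
  neg_symm : ∀ u v, neg u v → neg v u
  pos_irrefl : ∀ v, ¬ pos v v

namespace SGraph

variable {V W : Type}

/-- An edge-sign preserving homomorphism: preserves adjacency and edge signs. -/
def IsSpHom (G : SGraph V) (H : SGraph W) (f : V → W) : Prop :=
  (∀ u v, G.pos u v → H.pos (f u) (f v)) ∧ (∀ u v, G.neg u v → H.neg (f u) (f v))

/-- The signed graph obtained from `G` by switching at the set of vertices where `s` is `true`:
the sign of an edge is flipped exactly when its endpoints get different values of `s`. -/
def switch (G : SGraph V) (s : V → Bool) : SGraph V where
  pos u v := (s u = s v ∧ G.pos u v) ∨ (s u ≠ s v ∧ G.neg u v)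
  neg u v := (s u = s v ∧ G.neg u v) ∨ (s u ≠ s v ∧ G.pos u v)
  pos_symm := by
    rintro u v (⟨h, hp⟩ | ⟨h, hn⟩)
    · exact Or.inl ⟨h.symm, G.pos_symm u v hp⟩
    · exact Or.inr ⟨fun e => h e.symm, G.neg_symm u v hn⟩
  neg_symm := by
    rintro u v (⟨h, hn⟩ | ⟨h, hp⟩)
    · exact Or.inl ⟨h.symm, G.neg_symm u v hn⟩
    · exact Or.inr ⟨fun e => h e.symm, G.pos_symm u v hp⟩
  pos_irrefl := by
    rintro v (⟨_, hp⟩ | ⟨h, _⟩)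
    · exact G.pos_irrefl v hp
    · exact h rfl

/-- A switching homomorphism: an edge-sign preserving homomorphism after switching
at a suitable set of vertices of the source (equivalently, a vertex map preserving
adjacency and the signs of closed walks). -/
def SwHom (G : SGraph V) (H : SGraph W) : Prop :=
  ∃ (s : V → Bool) (f : V → W), (G.switch s).IsSpHom H f

/-- The underlying graph of the signed graph is bipartite. -/
def Bipartite (G : SGraph V) : Prop :=
  ∃ c : V → Bool, ∀ u v, G.pos u v ∨ G.neg u v → c u ≠ c v

end SGraph

/-- `x` reduced modulo `r` into `[0, r)` (for `r > 0`). -/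
noncomputable def rmod (x r : ℝ) : ℝ := x - r * ⌊x / r⌋

/-- The circular distance between the points `x` and `y` of the circle of
circumference `r` (the length of the shorter arc joining them). -/
noncomputable def cdist (r x y : ℝ) : ℝ := min (rmod (x - y) r) (rmod (y - x) r)

namespace SGraph

variable {V : Type}

/-- A circular `r`-coloring of a signed graph: vertices get points of a circle of
circumference `r` such that the endpoints of each positive edge are at circular
distance at least `1`, and each endpoint of a negative edge is at circular distance
at least `1` from the antipode of the other endpoint (equivalently, the endpoints of
a negative edge are at circular distance at most `r/2 - 1`). -/
def IsCircColoring (G : SGraph V) (r : ℝ) (φ : V → ℝ) : Prop :=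
  (∀ u v, G.pos u v → 1 ≤ cdist r (φ u) (φ v)) ∧
  (∀ u v, G.neg u v → 1 ≤ cdist r (φ u) (φ v + r / 2))

/-- The circular chromatic number of a signed graph. -/
noncomputable def circChrom (G : SGraph V) : ℝ :=
  sInf {r : ℝ | 1 ≤ r ∧ ∃ φ : V → ℝ, G.IsCircColoring r φ}

end SGraph

/-- The signed graph `(K_{k,k}, M)`: the complete bipartite graph `K_{k,k}` whose
negative edges form a perfect matching (the edges `inl i — inr i`). -/
def KkkM (k : ℕ) : SGraph (Fin k ⊕ Fin k) where
  pos x y := ∃ i j : Fin k, i ≠ j ∧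
    ((x = Sum.inl i ∧ y = Sum.inr j) ∨ (y = Sum.inl i ∧ x = Sum.inr j))
  neg x y := ∃ i : Fin k, (x = Sum.inl i ∧ y = Sum.inr i) ∨ (y = Sum.inl i ∧ x = Sum.inr i)
  pos_symm := by
    rintro x y ⟨i, j, hij, (⟨h1, h2⟩ | ⟨h1, h2⟩)⟩
    · exact ⟨i, j, hij, Or.inr ⟨h1, h2⟩⟩
    · exact ⟨i, j, hij, Or.inl ⟨h1, h2⟩⟩
  neg_symm := by
    rintro x y ⟨i, (⟨h1, h2⟩ | ⟨h1, h2⟩)⟩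
    · exact ⟨i, Or.inr ⟨h1, h2⟩⟩
    · exact ⟨i, Or.inl ⟨h1, h2⟩⟩
  pos_irrefl := by
    rintro v ⟨i, j, _, (⟨h1, h2⟩ | ⟨h1, h2⟩)⟩ <;> (subst h1; simp at h2)

section ProofAux
open SGraph Filter

private lemma rmod_nonneg {r : ℝ} (hr : 0 < r) (z : ℝ) : 0 ≤ rmod z r := by
  have h1 : (⌊z / r⌋ : ℝ) ≤ z / r := Int.floor_le _
  have h2 : r * (⌊z / r⌋ : ℝ) ≤ r * (z / r) := mul_le_mul_of_nonneg_left h1 hr.le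
  have h3 : r * (z / r) = z := by field_simp
  simp only [rmod]; linarith

private lemma rmod_lt {r : ℝ} (hr : 0 < r) (z : ℝ) : rmod z r < r := by
  have h1 : z / r < ⌊z / r⌋ + 1 := Int.lt_floor_add_one _
  have h2 : r * (z / r) < r * ((⌊z / r⌋ : ℝ) + 1) := (mul_lt_mul_iff_right₀ hr).mpr h1
  have h3 : r * (z / r) = z := by field_simp
  have h4 : r * ((⌊z / r⌋ : ℝ) + 1) = r * (⌊z / r⌋ : ℝ) + r := by ring
  simp only [rmod]; linarith

private lemma one_le_cdist_iff {r : ℝ} (hr : 0 < r) (x y : ℝ) :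
    1 ≤ cdist r x y ↔ ∀ k : ℤ, 1 ≤ |x - y - k * r| := by
  set d := x - y with hd
  have hyx : y - x = -d := by rw [hd]; ring
  constructor
  · intro h k
    have h1 : 1 ≤ rmod d r := le_trans h (min_le_left _ _)
    have h2 : 1 ≤ rmod (-d) r := by
      have := le_trans h (min_le_right _ _)
      rwa [hyx] at this
    rcases le_or_gt ((k : ℝ) * r) d with hk | hk
    · have hk' : (k : ℝ) ≤ d / r := (le_div_iff₀ hr).mpr hk
      have hk'' : k ≤ ⌊d / r⌋ := Int.le_floor.mpr hk'
      have : (k : ℝ) ≤ (⌊d / r⌋ : ℝ) := by exact_mod_cast hk''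
      have h3 : r * (⌊d / r⌋ : ℝ) ≥ r * k := mul_le_mul_of_nonneg_left this hr.le
      have h4 : 1 ≤ d - k * r := by
        have := h1; simp only [rmod] at this; linarith
      exact le_trans h4 (le_abs_self _)
    · have hk' : (-k : ℝ) ≤ -d / r := by
        rw [le_div_iff₀ hr]; nlinarith
      have hk'' : -k ≤ ⌊-d / r⌋ := Int.le_floor.mpr (by exact_mod_cast hk')
      have : ((-k : ℤ) : ℝ) ≤ (⌊-d / r⌋ : ℝ) := by exact_mod_cast hk''
      have h3 : r * (⌊-d / r⌋ : ℝ) ≥ r * (-k : ℝ) := by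
        apply mul_le_mul_of_nonneg_left _ hr.le
        push_cast at this ⊢; linarith
      have h4 : 1 ≤ -(d - k * r) := by
        have := h2; simp only [rmod] at this; linarith
      exact le_trans h4 (neg_le_abs _)
  · intro h
    apply le_min
    · have h1 := h ⌊d / r⌋
      have h2 : 0 ≤ rmod d r := rmod_nonneg hr d
      have h3 : rmod d r = d - (⌊d / r⌋ : ℝ) * r := by simp only [rmod]; ring
      rw [h3] at h2 ⊢
      rwa [abs_of_nonneg h2] at h1
    · rw [hyx]
      have h1 := h (-⌊-d / r⌋)
      have h2 : 0 ≤ rmod (-d) r := rmod_nonneg hr (-d)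
      have h3 : rmod (-d) r = -d - (⌊-d / r⌋ : ℝ) * r := by simp only [rmod]; ring
      have h4 : d - ((-⌊-d / r⌋ : ℤ) : ℝ) * r = -(-d - (⌊-d / r⌋ : ℝ) * r) := by
        push_cast; ring
      rw [h4, abs_neg] at h1
      rw [h3] at h2 ⊢
      rwa [abs_of_nonneg h2] at h1

private lemma isCC_iff {V : Type} (G : SGraph V) {r : ℝ} (hr : 0 < r) (φ : V → ℝ) :
    G.IsCircColoring r φ ↔
      ((∀ u v, G.pos u v → ∀ k : ℤ, 1 ≤ |φ u - φ v - k * r|) ∧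
       (∀ u v, G.neg u v → ∀ k : ℤ, 1 ≤ |φ u - φ v - r / 2 - k * r|)) := by
  unfold SGraph.IsCircColoring
  have e : ∀ u v (k : ℤ), φ u - (φ v + r / 2) - k * r = φ u - φ v - r / 2 - k * r := by
    intros; ring
  constructor
  · rintro ⟨h1, h2⟩
    refine ⟨fun u v huv k => (one_le_cdist_iff hr _ _).1 (h1 u v huv) k, fun u v huv k => ?_⟩
    have := (one_le_cdist_iff hr _ _).1 (h2 u v huv) k
    rwa [e] at this
  · rintro ⟨h1, h2⟩
    refine ⟨fun u v huv => (one_le_cdist_iff hr _ _).2 (h1 u v huv),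
            fun u v huv => (one_le_cdist_iff hr _ _).2 fun k => ?_⟩
    rw [e]; exact h2 u v huv k

private lemma grid_case {e r : ℝ} (hr : 0 < r) (m : ℤ) (h1 : 1 ≤ e - m * r)
    (h2 : e - m * r ≤ r - 1) (k : ℤ) : 1 ≤ |e - k * r| := by
  rcases le_or_gt k m with hk | hk
  · have hk' : (k : ℝ) ≤ (m : ℝ) := by exact_mod_cast hk
    have : (k : ℝ) * r ≤ (m : ℝ) * r := mul_le_mul_of_nonneg_right hk' hr.le
    have : 1 ≤ e - k * r := by linarith
    exact le_trans this (le_abs_self _)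
  · have hk' : (m : ℝ) + 1 ≤ (k : ℝ) := by exact_mod_cast hk
    have : ((m : ℝ) + 1) * r ≤ (k : ℝ) * r := mul_le_mul_of_nonneg_right hk' hr.le
    have : 1 ≤ -(e - k * r) := by nlinarith
    exact le_trans this (neg_le_abs _)

private lemma int_ne_case {m : ℤ} (hm : m % 3 ≠ 0) (k : ℤ) : (1 : ℝ) ≤ |(m : ℝ) - k * 3| := by
  have h : m - k * 3 ≠ 0 := by omega
  have h2 : (1 : ℤ) ≤ |m - k * 3| := Int.one_le_abs h
  have h3 : (1 : ℝ) ≤ |((m - k * 3 : ℤ) : ℝ)| := by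
    rw [← Int.cast_abs]; exact_mod_cast h2
  have h4 : ((m - k * 3 : ℤ) : ℝ) = (m : ℝ) - k * 3 := by push_cast; ring
  rwa [h4] at h3

private lemma half_case {e : ℝ} (he : e = 3 / 2 ∨ e = -(3 / 2)) (k : ℤ) :
    1 ≤ |e - k * 3| := by
  rcases he with rfl | rfl
  · apply grid_case (by norm_num : (0:ℝ) < 3) 0 <;> try norm_num
  · apply grid_case (by norm_num : (0:ℝ) < 3) (-1) <;> try norm_num

private lemma le_floor_sub {x y : ℝ} {m : ℤ} (h : y + (m : ℝ) ≤ x) : ⌊y⌋ + m ≤ ⌊x⌋ := by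
  rw [← Int.floor_add_intCast y m]
  exact Int.floor_mono h

private lemma floor_sub_le {x y : ℝ} {n : ℤ} (h : x ≤ y + (n : ℝ)) : ⌊x⌋ ≤ ⌊y⌋ + n := by
  rw [← Int.floor_add_intCast y n]
  exact Int.floor_mono h

end ProofAux

section ProofAux2
open SGraph Filter

private lemma scale_coloring {V : Type} (G : SGraph V) {x r : ℝ} (hx1 : 1 ≤ x) (hxr : x ≤ r)
    {φ : V → ℝ} (hφ : G.IsCircColoring x φ) : ∃ ψ : V → ℝ, G.IsCircColoring r ψ := by
  have hx0 : (0 : ℝ) < x := lt_of_lt_of_le one_pos hx1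
  have hr0 : (0 : ℝ) < r := lt_of_lt_of_le hx0 hxr
  set c := r / x with hcdef
  have hc1 : 1 ≤ c := (one_le_div hx0).mpr hxr
  have hc0 : 0 < c := lt_of_lt_of_le one_pos hc1
  have hcx : c * x = r := div_mul_cancel₀ r (ne_of_gt hx0)
  rw [isCC_iff G hx0] at hφ
  refine ⟨fun v => c * φ v, (isCC_iff G hr0 _).2 ⟨fun u v huv k => ?_, fun u v huv k => ?_⟩⟩
  · have h := hφ.1 u v huv k
    have e : c * φ u - c * φ v - (k : ℝ) * r = c * (φ u - φ v - k * x) := by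
      rw [← hcx]; ring
    rw [e, abs_mul, abs_of_pos hc0]
    nlinarith [abs_nonneg (φ u - φ v - (k:ℝ) * x)]
  · have h := hφ.2 u v huv k
    have e : c * φ u - c * φ v - r / 2 - (k : ℝ) * r = c * (φ u - φ v - x / 2 - k * x) := by
      rw [← hcx]; ring
    rw [e, abs_mul, abs_of_pos hc0]
    nlinarith [abs_nonneg (φ u - φ v - x / 2 - (k:ℝ) * x)]

private lemma shift_coloring {V : Type} (G : SGraph V) {r : ℝ} (hr : 0 < r) (φ : V → ℝ)
    (hφ : G.IsCircColoring r φ) : G.IsCircColoring r (fun v => rmod (φ v) r) := by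
  rw [isCC_iff G hr] at hφ ⊢
  obtain ⟨h1, h2⟩ := hφ
  constructor
  · intro u v huv k
    have h := h1 u v huv (k + ⌊φ u / r⌋ - ⌊φ v / r⌋)
    have e : rmod (φ u) r - rmod (φ v) r - (k : ℝ) * r
        = φ u - φ v - ((k + ⌊φ u / r⌋ - ⌊φ v / r⌋ : ℤ) : ℝ) * r := by
      simp only [rmod]; push_cast; ring
    rw [e]; exact h
  · intro u v huv k
    have h := h2 u v huv (k + ⌊φ u / r⌋ - ⌊φ v / r⌋)
    have e : rmod (φ u) r - rmod (φ v) r - r / 2 - (k : ℝ) * r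
        = φ u - φ v - r / 2 - ((k + ⌊φ u / r⌋ - ⌊φ v / r⌋ : ℤ) : ℝ) * r := by
      simp only [rmod]; push_cast; ring
    rw [e]; exact h

end ProofAux2

/-- for a signed bipartite graph, `χ_c(G,σ) ≤ 3` iff `(G,σ)` admits a
switching homomorphism to `(K_{3,3}, M)`. -/
theorem circChrom_le_three_iff_K33M {V : Type} [Fintype V] (G : SGraph V)
    (hbip : G.Bipartite) : G.circChrom ≤ 3 ↔ G.SwHom (KkkM 3) := by
  obtain ⟨c, hc⟩ := hbip
  constructor
  · intro h
    classical
    have h30 : (0:ℝ) < 3 := by norm_num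
    unfold SGraph.circChrom at h
    set S := {r : ℝ | 1 ≤ r ∧ ∃ φ : V → ℝ, G.IsCircColoring r φ} with hSdef
    have hS4 : (4 : ℝ) ∈ S := by
      refine ⟨by norm_num, fun v => if c v = true then (0:ℝ) else 1,
        (isCC_iff G (by norm_num) _).2 ⟨?_, ?_⟩⟩
      · intro u v huv k
        have hcuv := hc u v (Or.inl huv)
        cases hcu : c u <;> cases hcv2 : c v <;> rw [hcu, hcv2] at hcuv
        · exact absurd rfl hcuv
        · simp only [hcu, hcv2, reduceIte]
          exact grid_case (by norm_num) 0 (by push_cast; norm_num) (by push_cast; norm_num) k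
        · simp only [hcu, hcv2, reduceIte]
          exact grid_case (by norm_num) (-1) (by push_cast; norm_num) (by push_cast; norm_num) k
        · exact absurd rfl hcuv
      · intro u v huv k
        have hcuv := hc u v (Or.inr huv)
        cases hcu : c u <;> cases hcv2 : c v <;> rw [hcu, hcv2] at hcuv
        · exact absurd rfl hcuv
        · simp only [hcu, hcv2, reduceIte]
          exact grid_case (by norm_num) (-1) (by push_cast; norm_num) (by push_cast; norm_num) k
        · simp only [hcu, hcv2, reduceIte]
          exact grid_case (by norm_num) (-1) (by push_cast; norm_num) (by push_cast; norm_num) k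
        · exact absurd rfl hcuv
    have hne : S.Nonempty := ⟨4, hS4⟩
    have key : ∀ n : ℕ, ∃ φ : V → ℝ,
        (∀ v, φ v ∈ Set.Icc (0:ℝ) 4) ∧ G.IsCircColoring (3 + 1/((n:ℝ)+1)) φ := by
      intro n
      have hp : (0:ℝ) < 1/((n:ℝ)+1) := by positivity
      have hrn0 : (0:ℝ) < 3 + 1/((n:ℝ)+1) := by positivity
      have h3n : (3:ℝ) < 3 + 1/((n:ℝ)+1) := by linarith
      obtain ⟨x, hxS, hx3⟩ := exists_lt_of_csInf_lt hne (lt_of_le_of_lt h h3n)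
      obtain ⟨hx1, φ, hφ⟩ := hxS
      obtain ⟨ψ0, hψ0⟩ := scale_coloring G hx1 hx3.le hφ
      refine ⟨fun v => rmod (ψ0 v) _, fun v => ⟨rmod_nonneg hrn0 _, ?_⟩,
        shift_coloring G hrn0 ψ0 hψ0⟩
      have h1 := rmod_lt hrn0 (ψ0 v)
      have h2 : 1/((n:ℝ)+1) ≤ 1 := by
        rw [div_le_one (by positivity)]
        linarith [Nat.cast_nonneg (α := ℝ) n]
      linarith
    choose Φ hΦ0 hΦc using key
    have hcompact : IsCompact ((Set.univ : Set V).pi fun _ => Set.Icc (0:ℝ) 4) :=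
      isCompact_univ_pi fun _ => isCompact_Icc
    obtain ⟨ψ, -, σ, hσ, hconv⟩ := hcompact.tendsto_subseq
      (x := Φ) (fun n => Set.mem_univ_pi.mpr (hΦ0 n))
    have hcv : ∀ v, Filter.Tendsto (fun n => Φ (σ n) v) Filter.atTop (nhds (ψ v)) := by
      intro v
      have := tendsto_pi_nhds.mp hconv v
      simpa using this
    have hrconv : Filter.Tendsto (fun n : ℕ => 3 + 1/((σ n : ℝ)+1)) Filter.atTop (nhds 3) := by
      have h0 : Filter.Tendsto (fun n : ℕ => 1/((n:ℝ)+1)) Filter.atTop (nhds 0) :=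
        tendsto_one_div_add_atTop_nhds_zero_nat
      have h1 := h0.comp hσ.tendsto_atTop
      have h2 := (tendsto_const_nhds (x := (3:ℝ)) (f := Filter.atTop (α := ℕ))).add h1
      simpa using h2
    have hψcol : G.IsCircColoring 3 ψ := by
      rw [isCC_iff G h30]
      constructor
      · intro u v huv k
        have hn : ∀ n : ℕ, 1 ≤ |Φ (σ n) u - Φ (σ n) v - k * (3 + 1/((σ n : ℝ)+1))| := by
          intro n
          have hr : (0:ℝ) < 3 + 1/((σ n : ℝ)+1) := by positivity
          exact ((isCC_iff G hr _).1 (hΦc (σ n))).1 u v huv k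
        have hlim : Filter.Tendsto
            (fun n => |Φ (σ n) u - Φ (σ n) v - k * (3 + 1/((σ n : ℝ)+1))|)
            Filter.atTop (nhds |ψ u - ψ v - k * 3|) :=
          (((hcv u).sub (hcv v)).sub (tendsto_const_nhds.mul hrconv)).abs
        exact ge_of_tendsto' hlim hn
      · intro u v huv k
        have hn : ∀ n : ℕ, 1 ≤ |Φ (σ n) u - Φ (σ n) v - (3 + 1/((σ n : ℝ)+1))/2
            - k * (3 + 1/((σ n : ℝ)+1))| := by
          intro n
          have hr : (0:ℝ) < 3 + 1/((σ n : ℝ)+1) := by positivity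
          exact ((isCC_iff G hr _).1 (hΦc (σ n))).2 u v huv k
        have hlim : Filter.Tendsto
            (fun n => |Φ (σ n) u - Φ (σ n) v - (3 + 1/((σ n : ℝ)+1))/2
              - k * (3 + 1/((σ n : ℝ)+1))|)
            Filter.atTop (nhds |ψ u - ψ v - 3/2 - k * 3|) :=
          ((((hcv u).sub (hcv v)).sub (hrconv.div_const 2)).sub
            (tendsto_const_nhds.mul hrconv)).abs
        exact ge_of_tendsto' hlim hn
    -- combinatorial construction from the exact 3-coloring ψ
    set A : V → ℝ := fun v => rmod (ψ v) 3 with hA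
    set K : V → ℤ := fun v => ⌊2 * A v⌋ with hK
    have hA0 : ∀ v, 0 ≤ A v := fun v => rmod_nonneg h30 _
    have hA3 : ∀ v, A v < 3 := fun v => rmod_lt h30 _
    have hKu : ∀ v, K v = ⌊2 * A v⌋ := fun v => rfl
    have hKbd : ∀ v, 0 ≤ K v ∧ K v ≤ 5 := by
      intro v
      constructor
      · rw [hKu v]
        exact Int.le_floor.mpr (by push_cast; linarith [hA0 v])
      · have h6 : K v < (6:ℤ) := by
          rw [hKu v]
          exact Int.floor_lt.mpr (by push_cast; linarith [hA3 v])
        omega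
    rw [isCC_iff G h30] at hψcol
    have hdiff : ∀ u v : V, A u - A v
        = ψ u - ψ v - ((⌊ψ u / 3⌋ - ⌊ψ v / 3⌋ : ℤ) : ℝ) * 3 := by
      intro u v; simp only [hA, rmod]; push_cast; ring
    have hposK : ∀ u v, G.pos u v →
        (2 ≤ K u - K v ∧ K u - K v ≤ 4) ∨ (-4 ≤ K u - K v ∧ K u - K v ≤ -2) := by
      intro u v huv
      have hk := hψcol.1 u v huv
      set m : ℤ := ⌊ψ u / 3⌋ - ⌊ψ v / 3⌋ with hm
      have h1 : 1 ≤ |A u - A v| := by rw [hdiff u v]; exact hk m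
      have e2 : ψ u - ψ v - ((m + 1 : ℤ) : ℝ) * 3 = (A u - A v) - 3 := by
        rw [show (A u - A v) - 3 = (ψ u - ψ v - ((m:ℤ):ℝ)*3) - 3 from by rw [← hdiff u v]]
        push_cast; ring
      have e3 : ψ u - ψ v - ((m - 1 : ℤ) : ℝ) * 3 = (A u - A v) + 3 := by
        rw [show (A u - A v) + 3 = (ψ u - ψ v - ((m:ℤ):ℝ)*3) + 3 from by rw [← hdiff u v]]
        push_cast; ring
      have h2 : 1 ≤ |(A u - A v) - 3| := by rw [← e2]; exact hk (m + 1)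
      have h3 : 1 ≤ |(A u - A v) + 3| := by rw [← e3]; exact hk (m - 1)
      rcases le_abs.mp h1 with hD | hD
      · left
        have hub : A u - A v ≤ 2 := by
          rcases le_abs.mp h2 with hx | hx
          · exfalso; linarith [hA3 u, hA0 v]
          · linarith
        constructor
        · have h4 := le_floor_sub (x := 2 * A u) (y := 2 * A v) (m := 2)
            (by push_cast; linarith)
          rw [← hKu u, ← hKu v] at h4; omega
        · have h4 := floor_sub_le (x := 2 * A u) (y := 2 * A v) (n := 4)
            (by push_cast; linarith)
          rw [← hKu u, ← hKu v] at h4; omega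
      · right
        have hlb : -2 ≤ A u - A v := by
          rcases le_abs.mp h3 with hx | hx
          · linarith
          · exfalso; linarith [hA0 u, hA3 v]
        constructor
        · have h4 := floor_sub_le (x := 2 * A v) (y := 2 * A u) (n := 4)
            (by push_cast; linarith)
          rw [← hKu u, ← hKu v] at h4; omega
        · have h4 := le_floor_sub (x := 2 * A v) (y := 2 * A u) (m := 2)
            (by push_cast; linarith)
          rw [← hKu u, ← hKu v] at h4; omega
    have hnegK : ∀ u v, G.neg u v →
        (-1 ≤ K u - K v ∧ K u - K v ≤ 1) ∨ K u - K v = 5 ∨ K u - K v = -5 := by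
      intro u v huv
      have hk := hψcol.2 u v huv
      set m : ℤ := ⌊ψ u / 3⌋ - ⌊ψ v / 3⌋ with hm
      have e1 : ψ u - ψ v - 3/2 - ((m : ℤ) : ℝ) * 3 = (A u - A v) - 3/2 := by
        rw [show (A u - A v) - 3/2 = (ψ u - ψ v - ((m:ℤ):ℝ)*3) - 3/2 from by rw [← hdiff u v]]
        ring
      have e2 : ψ u - ψ v - 3/2 - ((m - 1 : ℤ) : ℝ) * 3 = (A u - A v) + 3/2 := by
        rw [show (A u - A v) + 3/2 = (ψ u - ψ v - ((m:ℤ):ℝ)*3) + 3/2 from by rw [← hdiff u v]]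
        push_cast; ring
      have h1 : 1 ≤ |(A u - A v) - 3/2| := by rw [← e1]; exact hk m
      have h2 : 1 ≤ |(A u - A v) + 3/2| := by rw [← e2]; exact hk (m - 1)
      rcases le_abs.mp h1 with ha | ha
      · right; left
        have h4 := le_floor_sub (x := 2 * A u) (y := 2 * A v) (m := 5)
          (by push_cast; linarith)
        rw [← hKu u, ← hKu v] at h4
        have hbu := hKbd u; have hbv := hKbd v
        omega
      · rcases le_abs.mp h2 with hb | hb
        · left
          have hx := floor_sub_le (x := 2 * A u) (y := 2 * A v) (n := 1)
            (by push_cast; linarith)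
          have hy := floor_sub_le (x := 2 * A v) (y := 2 * A u) (n := 1)
            (by push_cast; linarith)
          rw [← hKu u, ← hKu v] at hx hy; omega
        · right; right
          have h4 := le_floor_sub (x := 2 * A v) (y := 2 * A u) (m := 5)
            (by push_cast; linarith)
          rw [← hKu u, ← hKu v] at h4
          have hbu := hKbd u; have hbv := hKbd v
          omega
    -- the switching homomorphism
    set s : V → Bool := fun v => decide (K v % 2 = 1) with hs
    have hg3 : ∀ v, ((2 * K v) % 3).toNat < 3 := by intro v; omega
    set g : V → Fin 3 := fun v => ⟨((2 * K v) % 3).toNat, hg3 v⟩ with hg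
    set f : V → Fin 3 ⊕ Fin 3 :=
      fun v => if c v = true then Sum.inl (g v) else Sum.inr (g v) with hf
    refine ⟨s, f, ?_, ?_⟩
    · rintro u v (⟨hsv, huv⟩ | ⟨hsv, huv⟩)
      · have hpar : K u % 2 = 1 ↔ K v % 2 = 1 := by
          simp only [hs, decide_eq_decide] at hsv; exact hsv
        have hdk := hposK u v huv
        have hgne : g u ≠ g v := by
          simp only [hg, ne_eq, Fin.mk.injEq]; omega
        have hcuv := hc u v (Or.inl huv)
        cases hcu : c u <;> cases hcv2 : c v <;> rw [hcu, hcv2] at hcuv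
        · exact absurd rfl hcuv
        · refine ⟨g v, g u, Ne.symm hgne, Or.inr ⟨?_, ?_⟩⟩ <;> simp [hf, hcu, hcv2]
        · refine ⟨g u, g v, hgne, Or.inl ⟨?_, ?_⟩⟩ <;> simp [hf, hcu, hcv2]
        · exact absurd rfl hcuv
      · have hpar : ¬(K u % 2 = 1 ↔ K v % 2 = 1) := by
          simp only [hs, ne_eq, decide_eq_decide] at hsv; exact hsv
        have hdk := hnegK u v huv
        have hgne : g u ≠ g v := by
          simp only [hg, ne_eq, Fin.mk.injEq]; omega
        have hcuv := hc u v (Or.inr huv)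
        cases hcu : c u <;> cases hcv2 : c v <;> rw [hcu, hcv2] at hcuv
        · exact absurd rfl hcuv
        · refine ⟨g v, g u, Ne.symm hgne, Or.inr ⟨?_, ?_⟩⟩ <;> simp [hf, hcu, hcv2]
        · refine ⟨g u, g v, hgne, Or.inl ⟨?_, ?_⟩⟩ <;> simp [hf, hcu, hcv2]
        · exact absurd rfl hcuv
    · rintro u v (⟨hsv, huv⟩ | ⟨hsv, huv⟩)
      · have hpar : K u % 2 = 1 ↔ K v % 2 = 1 := by
          simp only [hs, decide_eq_decide] at hsv; exact hsv
        have hdk := hnegK u v huv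
        have hgeq : g u = g v := by
          apply Fin.ext; simp only [hg]; omega
        have hcuv := hc u v (Or.inr huv)
        cases hcu : c u <;> cases hcv2 : c v <;> rw [hcu, hcv2] at hcuv
        · exact absurd rfl hcuv
        · exact ⟨g v, Or.inr ⟨by simp [hf, hcv2], by simp [hf, hcu, hgeq]⟩⟩
        · exact ⟨g u, Or.inl ⟨by simp [hf, hcu], by simp [hf, hcv2, hgeq]⟩⟩
        · exact absurd rfl hcuv
      · have hpar : ¬(K u % 2 = 1 ↔ K v % 2 = 1) := by
          simp only [hs, ne_eq, decide_eq_decide] at hsv; exact hsv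
        have hdk := hposK u v huv
        have hgeq : g u = g v := by
          apply Fin.ext; simp only [hg]; omega
        have hcuv := hc u v (Or.inl huv)
        cases hcu : c u <;> cases hcv2 : c v <;> rw [hcu, hcv2] at hcuv
        · exact absurd rfl hcuv
        · exact ⟨g v, Or.inr ⟨by simp [hf, hcv2], by simp [hf, hcu, hgeq]⟩⟩
        · exact ⟨g u, Or.inl ⟨by simp [hf, hcu], by simp [hf, hcv2, hgeq]⟩⟩
        · exact absurd rfl hcuv
  · rintro ⟨s, f, hfp, hfn⟩
    set χ : Fin 3 ⊕ Fin 3 → ℝ := Sum.elim (fun i => (i.val : ℝ)) (fun i => (i.val : ℝ)) with hχ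
    set ψ : V → ℝ := fun v => χ (f v) + (if s v then (3 : ℝ) / 2 else 0) with hψ
    have hcol : G.IsCircColoring 3 ψ := by
      rw [isCC_iff G (by norm_num)]
      constructor
      · intro u v huv
        by_cases hs : s u = s v
        · obtain ⟨i, j, hij, hcase⟩ := hfp u v (Or.inl ⟨hs, huv⟩)
          have hi := i.isLt; have hj := j.isLt
          have hval : i.val ≠ j.val := fun hh => hij (Fin.ext hh)
          have hshift : ψ u - ψ v = χ (f u) - χ (f v) := by
            simp only [hψ, hs]; ring
          obtain ⟨m, hm3, hme⟩ : ∃ m : ℤ, m % 3 ≠ 0 ∧ ψ u - ψ v = (m : ℝ) := by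
            rcases hcase with ⟨h1, h2⟩ | ⟨h1, h2⟩
            · exact ⟨(i.val : ℤ) - j.val, by omega,
                by rw [hshift, h1, h2]; simp only [hχ, Sum.elim_inl, Sum.elim_inr]; push_cast; ring⟩
            · exact ⟨(j.val : ℤ) - i.val, by omega,
                by rw [hshift, h2, h1]; simp only [hχ, Sum.elim_inl, Sum.elim_inr]; push_cast; ring⟩
          intro k; rw [hme]; exact int_ne_case hm3 k
        · obtain ⟨i, hcase⟩ := hfn u v (Or.inr ⟨hs, huv⟩)
          have hχeq : χ (f u) = χ (f v) := by
            rcases hcase with ⟨h1, h2⟩ | ⟨h1, h2⟩ <;> rw [h1, h2] <;> simp [hχ]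
          have he : ψ u - ψ v = 3 / 2 ∨ ψ u - ψ v = -(3 / 2) := by
            cases hsu : s u <;> cases hsv : s v <;>
              simp [hsu, hsv] at hs ⊢ <;>
              simp [hψ, hsu, hsv, hχeq]
          intro k; exact half_case he k
      · intro u v huv
        by_cases hs : s u = s v
        · obtain ⟨i, hcase⟩ := hfn u v (Or.inl ⟨hs, huv⟩)
          have hχeq : χ (f u) = χ (f v) := by
            rcases hcase with ⟨h1, h2⟩ | ⟨h1, h2⟩ <;> rw [h1, h2] <;> simp [hχ]
          have he : ψ u - ψ v - 3 / 2 = -(3 / 2) := by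
            have hshift : ψ u - ψ v = χ (f u) - χ (f v) := by
              simp only [hψ, hs]; ring
            rw [hshift, hχeq]; ring
          intro k; rw [he]; exact half_case (Or.inr rfl) k
        · obtain ⟨i, j, hij, hcase⟩ := hfp u v (Or.inr ⟨hs, huv⟩)
          have hi := i.isLt; have hj := j.isLt
          have hval : i.val ≠ j.val := fun hh => hij (Fin.ext hh)
          obtain ⟨m, hm3, hme⟩ : ∃ m : ℤ, m % 3 ≠ 0 ∧ ψ u - ψ v - 3 / 2 = (m : ℝ) := by
            rcases hcase with ⟨h1, h2⟩ | ⟨h1, h2⟩ <;>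
              cases hsu : s u <;> cases hsv : s v <;> simp [hsu, hsv] at hs
            · exact ⟨(i.val : ℤ) - j.val - 3, by omega,
                by simp only [hψ, h1, h2, hsu, hsv, hχ, Sum.elim_inl, Sum.elim_inr, if_true, if_false]; push_cast; ring⟩
            · exact ⟨(i.val : ℤ) - j.val, by omega,
                by simp only [hψ, h1, h2, hsu, hsv, hχ, Sum.elim_inl, Sum.elim_inr, if_true, if_false]; push_cast; ring⟩
            · exact ⟨(j.val : ℤ) - i.val - 3, by omega,
                by simp only [hψ, h1, h2, hsu, hsv, hχ, Sum.elim_inl, Sum.elim_inr, if_true, if_false]; push_cast; ring⟩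
            · exact ⟨(j.val : ℤ) - i.val, by omega,
                by simp only [hψ, h1, h2, hsu, hsv, hχ, Sum.elim_inl, Sum.elim_inr, if_true, if_false]; push_cast; ring⟩
          intro k; rw [hme]; exact int_ne_case hm3 k
    show sInf _ ≤ 3
    exact csInf_le ⟨1, fun x hx => hx.1⟩ ⟨by norm_num, ψ, hcol⟩
end

section
/- Suppose (G, σ) is a signed bipartite graph with bipartition (A, B) and σ₁, ..., σ₆ are pairwise switching-equivalent signatures on G, all equivalent to σ, whose negative edge sets E₁, ..., E₆ are pairwise disjoint. Then the graph G' obtained from G by contracting all edges of E₁ (keeping all other edges, possibly creating parallel edges) has no loops and no odd cycle of length less than 5. -/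
/-!
Since the negative edge sets are disjoint, the switching `swᵢ` from `τ 0` to `τ i` (`i ≠ 0`)
flips every edge contracted in `G'`, and so does the bipartition `c`. Hence `dᵢ = c + swᵢ` is
constant on the contracted classes, and an edge of `G'` joining the classes of `x` and `y` is
`τ i`-negative as soon as `dᵢ x = dᵢ y`. A loop is therefore negative in `τ 1` and `τ 2`.
In a triangle `dᵢ` agrees on two corners, so each of `τ 1, …, τ 5` makes one of the three
edges negative, and by pigeonhole two of them share a negative edge.
-/

/-- `σ` and `τ` are switching equivalent signatures on the graph `G`:
`τ` is obtained from `σ` by switching at the set of vertices where `sw` is `true`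
(the sign of an edge flips exactly when its endpoints get different values of `sw`). -/
def SwEquiv {V : Type} (G : SimpleGraph V) (σ τ : Sym2 V → Bool) : Prop :=
  ∃ sw : V → Bool, ∀ u v : V, G.Adj u v →
    τ s(u, v) = Bool.xor (σ s(u, v)) (Bool.xor (sw u) (sw v))

/-- The spanning subgraph of `G` consisting of the edges that are negative under `σ`. -/
def negSub {V : Type} (G : SimpleGraph V) (σ : Sym2 V → Bool) : SimpleGraph V where
  Adj u v := G.Adj u v ∧ σ s(u, v) = false
  symm := ⟨by
    rintro u v ⟨h, hs⟩
    exact ⟨h.symm, by rwa [Sym2.eq_swap]⟩⟩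
  loopless := ⟨fun v h => G.loopless.irrefl v h.1⟩

/-- Adjacency in the graph obtained from `G` by contracting all edges that are
negative under `σ` (and keeping all other edges): two contracted classes are adjacent
via a `σ`-positive edge of `G`.  `x` and `y` represent their classes, i.e. their
connected components in the graph of negative edges. -/
def contAdj {V : Type} (G : SimpleGraph V) (σ : Sym2 V → Bool) (x y : V) : Prop :=
  ∃ u v, G.Adj u v ∧ σ s(u, v) = true ∧
    (negSub G σ).Reachable x u ∧ (negSub G σ).Reachable y v

theorem SimpleGraph.Coloring.xor_eq_of_reachable {V : Type} {H : SimpleGraph V}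
    (c d : H.Coloring Bool) {x y : V} (h : H.Reachable x y) :
    (c x ^^ d x) = (c y ^^ d y) := by
  obtain ⟨p⟩ := h
  have hcd := (c.even_length_iff_congr p).symm.trans (d.even_length_iff_congr p)
  revert hcd
  cases c x <;> cases c y <;> cases d x <;> cases d y <;> simp

namespace SwEquiv

variable {V : Type} {G : SimpleGraph V} {σ τ υ : Sym2 V → Bool}

theorem symm (h : SwEquiv G σ τ) : SwEquiv G τ σ := by
  obtain ⟨sw, hsw⟩ := h
  exact ⟨sw, fun u v huv => by simp [hsw u v huv]⟩

theorem trans (h₁ : SwEquiv G σ τ) (h₂ : SwEquiv G τ υ) : SwEquiv G σ υ := by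
  obtain ⟨sw₁, h₁⟩ := h₁
  obtain ⟨sw₂, h₂⟩ := h₂
  refine ⟨fun v => sw₁ v ^^ sw₂ v, fun u v huv => ?_⟩
  simp only [h₂ u v huv, h₁ u v huv, Bool.xor_assoc, Bool.xor_left_comm]

theorem exists_coloring_negSub (h : SwEquiv G σ τ)
    (hdisj : ∀ e ∈ G.edgeSet, ¬(σ e = false ∧ τ e = false)) :
    ∃ sw : (negSub G σ).Coloring Bool, ∀ u v : V, G.Adj u v →
      τ s(u, v) = (σ s(u, v) ^^ (sw u ^^ sw v)) := by
  obtain ⟨sw, hsw⟩ := h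
  refine ⟨SimpleGraph.Coloring.mk sw fun {u v} ⟨huv, hneg⟩ heq => ?_, hsw⟩
  refine hdisj s(u, v) huv ⟨hneg, ?_⟩
  rw [hsw u v huv, hneg, heq, Bool.xor_self, Bool.xor_false]

theorem exists_label_of_bipartite (h : SwEquiv G σ τ)
    (hdisj : ∀ e ∈ G.edgeSet, ¬(σ e = false ∧ τ e = false))
    (hbip : ∃ c : V → Bool, ∀ u v, G.Adj u v → c u ≠ c v) :
    ∃ d : V → Bool, ∀ ⦃x y : V⦄, d x = d y → ∀ ⦃u v : V⦄, G.Adj u v → σ s(u, v) = true →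
      (negSub G σ).Reachable x u → (negSub G σ).Reachable y v → τ s(u, v) = false := by
  obtain ⟨c, hc⟩ := hbip
  obtain ⟨sw, hsw⟩ := h.exists_coloring_negSub hdisj
  let c' : (negSub G σ).Coloring Bool := .mk c fun huv => hc _ _ huv.1
  refine ⟨fun x => c x ^^ sw x, fun x y hxy u v huv hpos hxu hyv => ?_⟩
  have hlabel : (c u ^^ sw u) = (c v ^^ sw v) :=
    ((c'.xor_eq_of_reachable sw hxu).symm.trans hxy).trans (c'.xor_eq_of_reachable sw hyv)
  have hcuv := hc u v huv
  rw [hsw u v huv, hpos]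
  revert hlabel hcuv
  cases c u <;> cases c v <;> cases sw u <;> cases sw v <;> decide

end SwEquiv

/-- if `G` is bipartite and `τ 0, …, τ 5` are signatures switching
equivalent to `σ` with pairwise disjoint sets of negative edges, then contracting all
negative edges of `τ 0` produces a graph with no loops and no odd cycle of length
less than `5` — that is (the only odd cycles of length `< 5` being loops and
triangles), no loops and no triangles. -/
theorem contraction_no_short_odd_cycles {V : Type} (G : SimpleGraph V)
    (σ : Sym2 V → Bool) (τ : Fin 6 → Sym2 V → Bool)
    (hbip : ∃ c : V → Bool, ∀ u v, G.Adj u v → c u ≠ c v)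
    (hequiv : ∀ i, SwEquiv G σ (τ i))
    (hdisj : ∀ i j, i ≠ j → ∀ e ∈ G.edgeSet, ¬(τ i e = false ∧ τ j e = false)) :
    (∀ x, ¬ contAdj G (τ 0) x x) ∧
    ¬ ∃ a b c : V, contAdj G (τ 0) a b ∧ contAdj G (τ 0) b c ∧ contAdj G (τ 0) a c := by
  have hlabel (i : Fin 6) (hi : i ≠ 0) :=
    ((hequiv 0).symm.trans (hequiv i)).exists_label_of_bipartite (hdisj 0 i hi.symm) hbip
  constructor
  · rintro x ⟨u, v, huv, hpos, hxu, hxv⟩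
    obtain ⟨d₁, hd₁⟩ := hlabel 1 (by decide)
    obtain ⟨d₂, hd₂⟩ := hlabel 2 (by decide)
    exact hdisj 1 2 (by decide) _ huv ⟨hd₁ rfl huv hpos hxu hxv, hd₂ rfl huv hpos hxu hxv⟩
  · classical
    rintro ⟨a, b, c, ⟨u₁, v₁, h₁, hp₁, ha₁, hb₁⟩, ⟨u₂, v₂, h₂, hp₂, hb₂, hc₂⟩,
      ⟨u₃, v₃, h₃, hp₃, ha₃, hc₃⟩⟩
    have hneg (i : Fin 5) : ∃ e ∈ ({s(u₁, v₁), s(u₂, v₂), s(u₃, v₃)} : Finset (Sym2 V)),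
        e ∈ G.edgeSet ∧ τ i.succ e = false := by
      obtain ⟨d, hd⟩ := hlabel i.succ i.succ_ne_zero
      by_cases hab : d a = d b
      · exact ⟨_, by simp, h₁, hd hab h₁ hp₁ ha₁ hb₁⟩
      by_cases hbc : d b = d c
      · exact ⟨_, by simp, h₂, hd hbc h₂ hp₂ hb₂ hc₂⟩
      have hac : d a = d c := by revert hab hbc; cases d a <;> cases d b <;> cases d c <;> decide
      exact ⟨_, by simp, h₃, hd hac h₃ hp₃ ha₃ hc₃⟩
    choose e he heG heneg using hneg
    obtain ⟨i, -, j, -, hij, heij⟩ := Finset.exists_ne_map_eq_of_card_lt_of_maps_to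
      (Finset.card_le_three.trans_lt (by decide)) (fun i _ => he i) (s := Finset.univ)
    exact hdisj _ _ (Fin.succ_injective _ |>.ne hij) _ (heG i) ⟨heneg i, heij ▸ heneg j⟩
end
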